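/- Let L be a nonempty level datum whose largest level k₀ satisfies k₀ < 1. Then B_L ≤ 1 − Ram(L); in particular B_L < 0. -/

import Mathlib

open Finset

/-- The ramification order of a level datum: the least common denominator of its
elements, i.e. the lcm of the denominators (`ram ∅ = 1`). -/
def ram (L : Finset ℚ) : ℕ := L.lcm Rat.den

/-- The least common denominator `d` of the "initial segment" of `L` consisting of the
elements `≥ k` (the elements come in decreasing order `k₀ > k₁ > ⋯`). -/
def segLcm (L : Finset ℚ) (k : ℚ) : ℕ := (L.filter (fun x => k ≤ x)).lcm Rat.den

/-- A level datum: a finite set of positive rationals such that the least common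
denominators `d₀, d₁, …` of the initial segments (for the decreasing order) are all `≥ 2`
and form a strictly increasing sequence.  (Since the `d_j` are increasing, requiring
`d_j ≥ 2` for all `j` is equivalent to `d₀ ≥ 2`, i.e. to the largest element not being
an integer.) -/
def IsLevelDatum (L : Finset ℚ) : Prop :=
  (∀ k ∈ L, 0 < k) ∧
  (∀ k ∈ L, 2 ≤ segLcm L k) ∧
  (∀ k ∈ L, ∀ k' ∈ L, k' < k → segLcm L k < segLcm L k')

/-- The largest level of `L` (junk value `0` for `L = ∅`). -/
def maxLevel (L : Finset ℚ) : ℚ := WithBot.unbotD 0 L.max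

/-- The numerator `s(k) := k · Ram(L) ∈ ℤ` of a level `k` of `L`. -/
def numer (L : Finset ℚ) (k : ℚ) : ℤ := (k * (ram L : ℚ)).num

/-- `σ := k₀ · Ram(L) ∈ ℤ`, the numerator of the largest level. -/
def sigma0 (L : Finset ℚ) : ℤ := numer L (maxLevel L)

/-- `gcd(s(x) for x ∈ s, Ram L)` : the gcd of `Ram L` together with the numerators of the
elements of a subset `s ⊆ L`. -/
def gSeg (L : Finset ℚ) (s : Finset ℚ) : ℕ :=
  Nat.gcd (ram L) (s.gcd (fun x => (numer L x).natAbs))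

/-- The quantity
`B_L = (r − (s₀,r))·s₀ + Σᵢ ((s₀,…,s_{i−1},r) − (s₀,…,s_i,r))·s_i − r² + 1`
(`B_∅ = 0`), equal to the dimension of the elementary wild character variety. -/
def B (L : Finset ℚ) : ℤ :=
  (∑ k ∈ L, ((gSeg L (L.filter (fun x => k < x)) : ℤ)
      - (gSeg L (L.filter (fun x => k ≤ x)) : ℤ)) * numer L k)
    - (ram L : ℤ) ^ 2 + 1

/-- A level datum is locally minimal at infinity if it is empty, or its largest level is
`< 1` or `> 2`. -/
def LocallyMinimal (L : Finset ℚ) : Prop :=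
  L = ∅ ∨ maxLevel L < 1 ∨ 2 < maxLevel L

/-- Rescaling of a level datum by a factor `c`, removing the integer elements. -/
def rescale (L : Finset ℚ) (c : ℚ) : Finset ℚ :=
  (L.image (fun k => c * k)).filter (fun x => x.den ≠ 1)

/-- The local simplification map `S_∞` on level data: if the largest level `k₀` satisfies
`1 < k₀ < 2`, rescale all the levels by `ρ/(σ−ρ)` (where `ρ = Ram L`, `σ = k₀·ρ`) and
remove the integer levels; otherwise do nothing. -/
def Sinf (L : Finset ℚ) : Finset ℚ :=
  if 1 < maxLevel L ∧ maxLevel L < 2 then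
    rescale L ((ram L : ℚ) / ((sigma0 L : ℚ) - (ram L : ℚ)))
  else L

/- Every level is `< 1`, so every numerator is at most `r - 1`. The coefficients
`gcd(s₀,…,s_{i-1},r) - gcd(s₀,…,s_i,r)` are nonnegative and telescope to `r - gcd(s₀,…,s_p,r) ≤ r - 1`,
so the sum in `B_L` is at most `(r - 1)²` and `B_L ≤ (r - 1)² - r² + 1 = 2 - 2r ≤ 1 - r`.
Finally `r ≥ d₀ ≥ 2`. -/

theorem Finset.sum_filter_lt_sub_filter_le {α M : Type*} [LinearOrder α] [AddCommGroup M]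
    (F : Finset α → M) (L : Finset α) :
    ∑ k ∈ L, (F (L.filter (k < ·)) - F (L.filter (k ≤ ·))) = F ∅ - F L := by
  classical
  induction L using Finset.induction_on_min with
  | empty => simp
  | insert a s ha ih =>
    have has : a ∉ s := fun h => lt_irrefl a (ha a h)
    have hlt : (insert a s).filter (a < ·) = s := by
      rw [filter_insert, if_neg (lt_irrefl a), filter_true_of_mem ha]
    have hle : (insert a s).filter (a ≤ ·) = insert a s := filter_true_of_mem
      (by simpa using fun x hx => (ha x hx).le)
    have hrest : ∀ p : α → Prop, [DecidablePred p] → ¬ p a →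
        (insert a s).filter p = s.filter p := fun p _ hp => by
      rw [filter_insert, if_neg hp]
    rw [sum_insert has, hlt, hle, sum_congr rfl fun k hk => by
      rw [hrest (k < ·) (not_lt.2 (ha k hk).le), hrest (k ≤ ·) (not_le.2 (ha k hk))], ih]
    abel

lemma ram_pos (L : Finset ℚ) : 0 < ram L :=
  Nat.pos_of_ne_zero fun h => by
    obtain ⟨x, -, hx⟩ := Finset.lcm_eq_zero_iff.1 h
    exact x.den_nz hx

lemma two_le_ram {L : Finset ℚ} (hL : IsLevelDatum L) (hne : L.Nonempty) : 2 ≤ ram L := by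
  obtain ⟨k, hk⟩ := hne
  have hseg : segLcm L k ∣ ram L := lcm_dvd fun x hx => dvd_lcm (mem_of_mem_filter x hx)
  exact (hL.2.1 k hk).trans (Nat.le_of_dvd (ram_pos L) hseg)

lemma le_maxLevel {L : Finset ℚ} {k : ℚ} (hk : k ∈ L) : k ≤ maxLevel L := by
  rw [maxLevel, ← coe_max' ⟨k, hk⟩, WithBot.unbotD_coe]
  exact le_max' L k hk

lemma cast_numer {L : Finset ℚ} {k : ℚ} (hk : k ∈ L) : (numer L k : ℚ) = k * ram L := by
  obtain ⟨m, hm⟩ : k.den ∣ ram L := dvd_lcm hk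
  have : k * ram L = ((k.num * m : ℤ) : ℚ) := by
    rw [hm]; push_cast; rw [← mul_assoc, Rat.mul_den_eq_num]
  rw [numer, this, Rat.num_intCast]

lemma numer_lt_ram {L : Finset ℚ} {k : ℚ} (hk : k ∈ L) (hk1 : k < 1) : numer L k < ram L := by
  have hr : (0 : ℚ) < ram L := by exact_mod_cast ram_pos L
  have : (numer L k : ℚ) < ram L := by rw [cast_numer hk]; nlinarith
  exact_mod_cast this

lemma gSeg_empty (L : Finset ℚ) : gSeg L ∅ = ram L := by simp [gSeg]

lemma gSeg_pos (L s : Finset ℚ) : 0 < gSeg L s := Nat.gcd_pos_of_pos_left _ (ram_pos L)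

lemma gSeg_dvd_of_subset {L s t : Finset ℚ} (hst : s ⊆ t) : gSeg L t ∣ gSeg L s :=
  Nat.dvd_gcd (Nat.gcd_dvd_left _ _) <| Finset.dvd_gcd fun _ hx =>
    (Nat.gcd_dvd_right _ _).trans (Finset.gcd_dvd (hst hx))

lemma B_le_of_maxLevel_lt_one {L : Finset ℚ} (hmax : maxLevel L < 1) :
    B L ≤ 2 - 2 * (ram L : ℤ) := by
  have hr : (1 : ℤ) ≤ ram L := by exact_mod_cast ram_pos L
  set r : ℤ := (ram L : ℤ)
  set c : ℚ → ℤ := fun k => gSeg L (L.filter (k < ·)) - gSeg L (L.filter (k ≤ ·))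
  have hc : ∀ k ∈ L, 0 ≤ c k := fun k _ => sub_nonneg.2 <| by
    exact_mod_cast Nat.le_of_dvd (gSeg_pos L _)
      (gSeg_dvd_of_subset (monotone_filter_right L fun _ _ => le_of_lt))
  have hsum_c : ∑ k ∈ L, c k = r - gSeg L L := by
    rw [sum_filter_lt_sub_filter_le (fun s => (gSeg L s : ℤ)), gSeg_empty]
  have hg : (1 : ℤ) ≤ gSeg L L := by exact_mod_cast gSeg_pos L L
  have hsum : ∑ k ∈ L, c k * numer L k ≤ (r - 1) * (r - 1) :=
    calc ∑ k ∈ L, c k * numer L k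
        ≤ ∑ k ∈ L, c k * (r - 1) := sum_le_sum fun k hk => mul_le_mul_of_nonneg_left
          (Int.le_sub_one_of_lt (numer_lt_ram hk ((le_maxLevel hk).trans_lt hmax))) (hc k hk)
      _ = (r - gSeg L L) * (r - 1) := by rw [← sum_mul, hsum_c]
      _ ≤ (r - 1) * (r - 1) := mul_le_mul_of_nonneg_right (by linarith) (by linarith)
  change ∑ k ∈ L, c k * numer L k - r ^ 2 + 1 ≤ 2 - 2 * r
  linear_combination hsum

/-- if `L` is a nonempty level datum whose largest level is `< 1`, then
`B_L ≤ 1 − Ram(L)`; in particular `B_L < 0`. -/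
theorem stmt_0 (L : Finset ℚ) (hL : IsLevelDatum L) (hne : L.Nonempty)
    (hmax : maxLevel L < 1) :
    B L ≤ 1 - (ram L : ℤ) ∧ B L < 0 := by
  have hr : (2 : ℤ) ≤ ram L := by exact_mod_cast two_le_ram hL hne
  have hB := B_le_of_maxLevel_lt_one hmax
  exact ⟨by linarith, by linarith⟩
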